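/- arXiv:1109.3919 — 3 statements merged into one kernel-verified Lean document; each statement's English description precedes it below -/
import Mathlib

section
/- Let ℳ ⊆ 𝕋² be a connected minimal set of a homeomorphism f : 𝕋² → 𝕋², and assume there exists a bounded topological disk D₀ which is a connected component of ℳᶜ and is periodic of period p (i.e. f^p(D₀) = D₀ and p is minimal with this property). Then ℳ = ∂D₀ = ∂D₁ = ... = ∂D_{p−1}, where D_k = f^k(D₀) for k = 1, ..., p−1. -/
open Set Topology Filter

noncomputable section

/-- The one-dimensional torus (circle) `𝕋¹ = ℝ/ℤ`. -/
abbrev T1 := AddCircle (1 : ℝ)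
/-- The plane `ℝ²`. -/
abbrev R2 := ℝ × ℝ
/-- The two-dimensional torus `𝕋² = ℝ²/ℤ²`. -/
abbrev T2 := T1 × T1
/-- The open annulus `𝔸 = 𝕋¹ × ℝ`. -/
abbrev Ann := T1 × ℝ

/-- The canonical projection `π : ℝ² → 𝕋²`. -/
def proj : R2 → T2 := fun z => ((z.1 : T1), (z.2 : T1))

/-- The point of `ℝ²` corresponding to an integer vector. -/
def intVec (v : ℤ × ℤ) : R2 := ((v.1 : ℝ), (v.2 : ℝ))

/-- `U` is a connected component of `S`. -/
def IsCCOf {α : Type*} [TopologicalSpace α] (U S : Set α) : Prop :=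
  ∃ x ∈ S, U = connectedComponentIn S x

/-- A set `A ⊆ 𝕋²` is bounded if all connected components of `π⁻¹(A)` are bounded in `ℝ²`. -/
def BoundedLift (A : Set T2) : Prop :=
  ∀ x ∈ proj ⁻¹' A, Bornology.IsBounded (connectedComponentIn (proj ⁻¹' A) x)

/-- An open topological disk in `𝕋²`: an open set homeomorphic to the open unit disk. -/
def IsTopDisk (D : Set T2) : Prop :=
  IsOpen D ∧ Nonempty (D ≃ₜ (Metric.ball (0:ℂ) 1))

/-- `U ⊆ 𝕋²` contains a closed curve of homotopy type `v ∈ ℤ²`, i.e. there is a continuous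
path `Γ` in `ℝ²` whose projection stays in `U` and whose endpoints differ by the
integer vector `v` (so that the projection is a loop of homotopy type `v`). -/
def LoopOfType (U : Set T2) (v : ℤ × ℤ) : Prop :=
  ∃ Γ : C(ℝ, R2), (∀ t ∈ Icc (0:ℝ) 1, proj (Γ t) ∈ U) ∧ Γ 1 = Γ 0 + intVec v

/-- The subgroup of `π₁(𝕋²) ≅ ℤ²` generated by classes of loops contained in `U`. -/
def loopGroup (U : Set T2) : AddSubgroup (ℤ × ℤ) :=
  AddSubgroup.closure {v : ℤ × ℤ | LoopOfType U v}

/-- A homotopically trivial subset of `𝕋²`: every loop in `U` is trivial in `𝕋²`. -/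
def TrivialSet (U : Set T2) : Prop := loopGroup U = ⊥

/-- A doubly essential open connected subset of `𝕋²`: the classes of loops in `U`
generate all of `π₁(𝕋²) ≅ ℤ²`. -/
def IsDoublyEssential (U : Set T2) : Prop :=
  IsOpen U ∧ IsConnected U ∧ loopGroup U = ⊤

/-- An essential annulus in `𝕋²`: an open set homeomorphic to `𝕋¹ × ℝ` containing a
homotopically non-trivial closed curve of `𝕋²`. -/
def IsEssentialAnnulus (A : Set T2) : Prop :=
  IsOpen A ∧ Nonempty (A ≃ₜ Ann) ∧ ∃ v : ℤ × ℤ, v ≠ 0 ∧ LoopOfType A v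

/-- A minimal set of `f`: non-empty, compact, `f`-invariant, and minimal with respect to
inclusion among such sets. -/
def IsMinimalSet (f : T2 → T2) (M : Set T2) : Prop :=
  M.Nonempty ∧ IsCompact M ∧ f '' M = M ∧
    ∀ K : Set T2, K ⊆ M → K.Nonempty → IsCompact K → f '' K = K → K = M

/-- A set is periodic for `f` if some positive iterate of `f` maps it onto itself. -/
def IsPeriodicSet (f : T2 → T2) (U : Set T2) : Prop := ∃ n : ℕ, 1 ≤ n ∧ f^[n] '' U = U

/-- A subset of the annulus is unbounded above. -/
def UnbAbove (S : Set Ann) : Prop := ∀ r : ℝ, ∃ z ∈ S, r < z.2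
/-- A subset of the annulus is unbounded below. -/
def UnbBelow (S : Set Ann) : Prop := ∀ r : ℝ, ∃ z ∈ S, z.2 < r

/-- An annular continuum in `𝔸`: compact, connected, and its complement has exactly two
connected components, one unbounded below and the other unbounded above. -/
def IsAnnularContinuumAnn (C : Set Ann) : Prop :=
  IsCompact C ∧ IsConnected C ∧
    ∃ Um Up : Set Ann, IsCCOf Um Cᶜ ∧ IsCCOf Up Cᶜ ∧ Um ≠ Up ∧
      UnbBelow Um ∧ UnbAbove Up ∧ ∀ W, IsCCOf W Cᶜ → W = Um ∨ W = Up

/-- A circloid in `𝔸`: an annular continuum which is minimal with respect to inclusion. -/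
def IsCircloidAnn (C : Set Ann) : Prop :=
  IsAnnularContinuumAnn C ∧ ∀ C' ⊆ C, IsAnnularContinuumAnn C' → C' = C

/-- The homotopy type in `𝕋²` of a (closed) curve `g : ℝ → 𝕋²` (restricted to `[0,1]`),
computed through a lift to `ℝ²`. -/
def MapLoopOfType (g : ℝ → T2) (v : ℤ × ℤ) : Prop :=
  ∃ Γ : C(ℝ, R2), (∀ t ∈ Icc (0:ℝ) 1, proj (Γ t) = g t) ∧ Γ 1 = Γ 0 + intVec v

/-- A circloid in `𝕋²`: a set contained in an embedded open annulus `𝒜 ⊆ 𝕋²` whose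
preimage in `𝔸` is a circloid. -/
def IsCircloid (A : Set T2) : Prop :=
  ∃ φ : Ann → T2, IsOpenEmbedding φ ∧ A ⊆ range φ ∧ IsCircloidAnn (φ ⁻¹' A)

/-- An essential circloid in `𝕋²`: the essential loops of the surrounding embedded
annulus are homotopically non-trivial in `𝕋²`. -/
def IsEssentialCircloid (A : Set T2) : Prop :=
  ∃ φ : Ann → T2, IsOpenEmbedding φ ∧ A ⊆ range φ ∧ IsCircloidAnn (φ ⁻¹' A) ∧
    ∃ v : ℤ × ℤ, v ≠ 0 ∧ MapLoopOfType (fun t : ℝ => φ ((t : T1), 0)) v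

/-- A homotopically trivial circloid in `𝕋²`: the essential loops of the surrounding
embedded annulus are homotopically trivial in `𝕋²`. -/
def IsTrivialCircloid (A : Set T2) : Prop :=
  ∃ φ : Ann → T2, IsOpenEmbedding φ ∧ A ⊆ range φ ∧ IsCircloidAnn (φ ⁻¹' A) ∧
    MapLoopOfType (fun t : ℝ => φ ((t : T1), 0)) 0

/-- `(f, M)` is an extension of `(g, N)`: `g` is a homeomorphism with minimal set `N`, and
there is a continuous surjection `Φ`, homotopic to the identity, with `Φ ∘ f = g ∘ Φ` and
`Φ(M) = N`. -/
def IsExtensionOf (f : T2 → T2) (M : Set T2) (g : T2 → T2) (N : Set T2) : Prop :=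
  IsHomeomorph g ∧ IsMinimalSet g N ∧
    ∃ Φ : C(T2, T2), Function.Surjective Φ ∧ Φ.Homotopic (ContinuousMap.id T2) ∧
      (∀ x, Φ (f x) = g (Φ x)) ∧ Φ '' M = N

/-- A Cantor set: non-empty, compact, perfect and totally disconnected. -/
def IsCantorSet (N : Set T2) : Prop :=
  N.Nonempty ∧ IsCompact N ∧ Perfect N ∧ IsTotallyDisconnected N

/-- `M` is an extension of a Cantor set. -/
def ExtensionOfCantor (f : T2 → T2) (M : Set T2) : Prop :=
  ∃ g N, IsExtensionOf f M g N ∧ IsCantorSet N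

/-- `M` is an extension of a periodic orbit (a finite minimal set). -/
def ExtensionOfPeriodicOrbit (f : T2 → T2) (M : Set T2) : Prop :=
  ∃ g N, IsExtensionOf f M g N ∧ N.Finite

/-- Type 1: the complement of `M` is a disjoint union of topological disks. -/
def Type1 (M : Set T2) : Prop := ∀ U, IsCCOf U Mᶜ → IsTopDisk U

/-- Type 2: the complement of `M` is a disjoint union of at least one essential annulus
and topological disks. -/
def Type2 (M : Set T2) : Prop :=
  (∃ U, IsCCOf U Mᶜ ∧ IsEssentialAnnulus U) ∧
    ∀ U, IsCCOf U Mᶜ → IsTopDisk U ∨ IsEssentialAnnulus U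

/-- Type 3: the complement of `M` is a disjoint union of exactly one doubly essential
component and bounded topological disks. -/
def Type3 (M : Set T2) : Prop :=
  ∃ U, IsCCOf U Mᶜ ∧ IsDoublyEssential U ∧
    ∀ V, IsCCOf V Mᶜ → V = U ∨ (IsTopDisk V ∧ BoundedLift V)

/-- `f` is semi-conjugate to an irrational rotation of `𝕋¹`. -/
def SemiconjToIrrationalRotation (f : T2 → T2) : Prop :=
  ∃ h : C(T2, T1), Function.Surjective h ∧
    ∃ α : ℝ, Irrational α ∧ ∀ x, h (f x) = h x + (α : T1)

/-- `f` is non-wandering: no non-empty open set is disjoint from all its forward iterates. -/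
def NonWandering (f : T2 → T2) : Prop :=
  ¬ ∃ U : Set T2, IsOpen U ∧ U.Nonempty ∧ ∀ n : ℕ, 1 ≤ n → f^[n] '' U ∩ U = ∅

/-- The rotation set of a lift `F : ℝ² → ℝ²`. -/
def rotSet (F : R2 → R2) : Set R2 :=
  {ρ | ∃ (z : ℕ → R2) (n : ℕ → ℕ), StrictMono n ∧
    Tendsto (fun i => ((n i : ℝ))⁻¹ • (F^[n i] (z i) - z i)) atTop (nhds ρ)}


/-!
The frontier of `D₀` is a nonempty closed `f^p`-invariant subset of `M`, so it suffices that a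
connected minimal set `M` of `f` is also minimal for `f^p`. Take an `f^p`-minimal `N ⊆ M`
(Zorn). Then `M = N ∪ f N ∪ ⋯ ∪ f^{p-1} N` by minimality of `M`, and each `f^i N` either equals
`N` or is disjoint from it, since `f^i N ∩ N` is again closed and `f^p`-invariant. Thus `N` is
clopen in `M`, hence `N = M`, and `M = ∂D₀`. Finally `∂D_k = f^k(∂D₀) = f^k(M) = M`.
-/

open Function

section Iterates

variable {α : Type*} {g : α → α}

theorem image_eq_of_subset_image_of_iterate_image_eq {A : Set α} {p : ℕ} (hp : 1 ≤ p)
    (hA : A ⊆ g '' A) (hpA : g^[p] '' A = A) : g '' A = A := by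
  have hmono : Monotone fun k => g^[k] '' A := monotone_nat_of_le_succ fun k => by
    simp only [iterate_succ, image_comp]
    exact image_mono hA
  refine Subset.antisymm ?_ hA
  simpa only [iterate_one, hpA] using hmono hp

theorem image_iterate_eq_image_iterate_mod {N : Set α} {p : ℕ} (hpN : g^[p] '' N = N) (i : ℕ) :
    g^[i] '' N = g^[i % p] '' N := by
  rw [← Nat.mod_add_div i p, iterate_add, image_comp, iterate_mul,
    IsFixedPt.image_iterate hpN, Nat.mod_add_div]

end Iterates

section ClosedInvariant

variable {α : Type*} [TopologicalSpace α] {g : α → α}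

theorem IsHomeomorph.iterate (hg : IsHomeomorph g) (n : ℕ) : IsHomeomorph g^[n] := by
  induction n with
  | zero => exact IsHomeomorph.id
  | succ n ih => rw [iterate_succ]; exact ih.comp hg

def IsNonemptyClosedInvariant (g : α → α) (A : Set α) : Prop :=
  A.Nonempty ∧ IsClosed A ∧ MapsTo g A A

theorem IsNonemptyClosedInvariant.exists_minimal_subset [CompactSpace α] {K : Set α}
    (hK : IsNonemptyClosedInvariant g K) :
    ∃ N ⊆ K, Minimal (IsNonemptyClosedInvariant g) N := by
  refine zorn_superset_nonempty {A | IsNonemptyClosedInvariant g A}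
    (fun c hc hchain hcne => ?_) K hK
  refine ⟨⋂₀ c, ⟨?_, isClosed_sInter fun A hA => (hc hA).2.1, ?_⟩,
    fun A hA => sInter_subset_of_mem hA⟩
  · have : Nonempty c := hcne.to_subtype
    have hdir : DirectedOn (· ⊇ ·) c := fun A hA B hB =>
      (hchain.total hA hB).elim (fun h => ⟨A, hA, subset_rfl, h⟩) (fun h => ⟨B, hB, h, subset_rfl⟩)
    exact IsCompact.nonempty_sInter_of_directed_nonempty_isCompact_isClosed hdir
      (fun A hA => (hc hA).1) (fun A hA => (hc hA).2.1.isCompact) (fun A hA => (hc hA).2.1)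
  · exact mapsTo_sInter.mpr fun A hA => (hc hA).2.2.mono_left (sInter_subset_of_mem hA)

theorem Minimal.image_eq_of_isNonemptyClosedInvariant [CompactSpace α] [T2Space α]
    (hg : Continuous g) {N : Set α} (hN : Minimal (IsNonemptyClosedInvariant g) N) :
    g '' N = N := by
  obtain ⟨hNne, hNcl, hNg⟩ := hN.prop
  have hgN : IsNonemptyClosedInvariant g (g '' N) :=
    ⟨hNne.image g, (hNcl.isCompact.image hg).isClosed,
      (mapsTo_image g N).mono_left hNg.image_subset⟩
  exact hN.eq_of_le hgN hNg.image_subset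

theorem Minimal.image_iterate_eq_of_inter_nonempty [CompactSpace α] [T2Space α]
    (hg : Continuous g) {p : ℕ} (hp : 1 ≤ p) {N : Set α}
    (hN : Minimal (IsNonemptyClosedInvariant g^[p]) N) {i : ℕ} (hi : (g^[i] '' N ∩ N).Nonempty) :
    g^[i] '' N = N := by
  have hpN : g^[p] '' N = N := hN.image_eq_of_isNonemptyClosedInvariant (hg.iterate p)
  have hpiN : g^[p] '' (g^[i] '' N) = g^[i] '' N := by
    rw [← image_comp, ← iterate_add, add_comm, iterate_add, image_comp, hpN]
  have hC : IsNonemptyClosedInvariant g^[p] (g^[i] '' N ∩ N) :=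
    ⟨hi, (hN.prop.2.1.isCompact.image (hg.iterate i)).isClosed.inter hN.prop.2.1,
      ((mapsTo_image _ _).mono_right hpiN.subset).inter_inter hN.prop.2.2⟩
  have hNi : N ⊆ g^[i] '' N :=
    (hN.eq_of_le hC inter_subset_right).symm.trans_subset inter_subset_left
  refine image_eq_of_subset_image_of_iterate_image_eq hp hNi ?_
  rw [← iterate_mul, mul_comm, iterate_mul]
  exact IsFixedPt.image_iterate hpN i

theorem isNonemptyClosedInvariant_biUnion_iterate [CompactSpace α] [T2Space α]
    (hg : Continuous g) {p : ℕ} (hp : 1 ≤ p) {N : Set α} (hNne : N.Nonempty) (hNcl : IsClosed N)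
    (hpN : g^[p] '' N = N) : IsNonemptyClosedInvariant g (⋃ i ∈ Iio p, g^[i] '' N) := by
  refine ⟨?_, (finite_Iio p).isClosed_biUnion fun i _ =>
    (hNcl.isCompact.image (hg.iterate i)).isClosed, ?_⟩
  · obtain ⟨x, hx⟩ := hNne
    exact ⟨x, mem_biUnion (mem_Iio.mpr hp) (by rwa [iterate_zero, image_id])⟩
  · intro x hx
    obtain ⟨i, -, y, hy, rfl⟩ := mem_iUnion₂.mp hx
    refine mem_biUnion (Nat.mod_lt (i + 1) hp) ?_
    rw [← image_iterate_eq_image_iterate_mod hpN]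
    exact ⟨y, hy, iterate_succ_apply' g i y⟩

end ClosedInvariant

section Components

variable {α : Type*} [TopologicalSpace α]

theorem IsPreconnected.subset_of_subset_biUnion {ι : Type*} {s N : Set α} {t : Set ι}
    {A : ι → Set α} (hs : IsPreconnected s) (ht : t.Finite) (hA : ∀ i ∈ t, IsClosed (A i))
    (hN : IsClosed N) (hsA : s ⊆ ⋃ i ∈ t, A i) (hAN : ∀ i ∈ t, A i ⊆ N ∨ Disjoint (A i) N)
    (hsN : (s ∩ N).Nonempty) : s ⊆ N := by
  set B := ⋃ i ∈ {i ∈ t | Disjoint (A i) N}, A i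
  have hB : IsClosed B := (ht.subset (sep_subset _ _)).isClosed_biUnion fun i hi => hA i hi.1
  have hNB : N ∩ B = ∅ := (disjoint_iUnion₂_right.mpr fun i hi => hi.2.symm).inter_eq
  have hsNB : s ⊆ N ∪ B := fun x hx => by
    obtain ⟨i, hi, hxi⟩ := mem_iUnion₂.mp (hsA hx)
    rcases hAN i hi with h | h
    · exact Or.inl (h hxi)
    · exact Or.inr (mem_biUnion ⟨hi, h⟩ hxi)
  rcases isPreconnected_iff_subset_of_disjoint_closed.mp hs N B hN hB hsNB
    (by rw [hNB, inter_empty]) with h | h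
  · exact h
  · obtain ⟨x, hxs, hxN⟩ := hsN
    exact (eq_empty_iff_forall_notMem.mp hNB x ⟨hxN, h hxs⟩).elim

theorem IsCCOf.frontier_subset {S D : Set α} (hD : IsCCOf D Sᶜ) (hDo : IsOpen D) :
    frontier D ⊆ S := by
  obtain ⟨x₀, hx₀, rfl⟩ := hD
  intro x hx
  by_contra hxS
  have hins : insert x (connectedComponentIn Sᶜ x₀) ⊆ connectedComponentIn Sᶜ x₀ :=
    (isPreconnected_connectedComponentIn.subset_closure (subset_insert _ _)
      (insert_subset hx.1 subset_closure)).subset_connectedComponentIn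
      (mem_insert_of_mem _ (mem_connectedComponentIn hx₀))
      (insert_subset hxS (connectedComponentIn_subset _ _))
  exact (hDo.frontier_eq ▸ hx).2 (hins (mem_insert x _))

theorem IsCCOf.nonempty {S D : Set α} (hD : IsCCOf D S) : D.Nonempty := by
  obtain ⟨x, hx, rfl⟩ := hD
  exact ⟨x, mem_connectedComponentIn hx⟩

theorem IsCCOf.subset {S D : Set α} (hD : IsCCOf D S) : D ⊆ S := by
  obtain ⟨x, -, rfl⟩ := hD
  exact connectedComponentIn_subset _ _

end Components

section MinimalSet

variable {f : T2 → T2} {M K : Set T2}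

theorem IsMinimalSet.image_iterate_eq (hM : IsMinimalSet f M) (n : ℕ) : f^[n] '' M = M :=
  IsFixedPt.image_iterate hM.2.2.1 n

theorem IsMinimalSet.eq_of_isNonemptyClosedInvariant (hf : Continuous f) (hM : IsMinimalSet f M)
    (hK : IsNonemptyClosedInvariant f K) (hKM : K ⊆ M) : K = M := by
  obtain ⟨N, hNK, hN⟩ := hK.exists_minimal_subset
  have hNM : N = M := hM.2.2.2 N (hNK.trans hKM) hN.prop.1 hN.prop.2.1.isCompact
    (hN.image_eq_of_isNonemptyClosedInvariant hf)
  exact hKM.antisymm (hNM ▸ hNK)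

theorem IsMinimalSet.eq_of_isNonemptyClosedInvariant_iterate (hf : Continuous f)
    (hM : IsMinimalSet f M) (hMconn : IsPreconnected M) {p : ℕ} (hp : 1 ≤ p)
    (hK : IsNonemptyClosedInvariant f^[p] K) (hKM : K ⊆ M) : K = M := by
  obtain ⟨N, hNK, hN⟩ := hK.exists_minimal_subset
  have hNM : N ⊆ M := hNK.trans hKM
  have hpN : f^[p] '' N = N := hN.image_eq_of_isNonemptyClosedInvariant (hf.iterate p)
  have horbit : ⋃ i ∈ Iio p, f^[i] '' N = M :=
    hM.eq_of_isNonemptyClosedInvariant hf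
      (isNonemptyClosedInvariant_biUnion_iterate hf hp hN.prop.1 hN.prop.2.1 hpN)
      (iUnion₂_subset fun i _ => hM.image_iterate_eq i ▸ image_mono hNM)
  have hMN : M ⊆ N := by
    refine hMconn.subset_of_subset_biUnion (finite_Iio p)
      (fun i _ => (hN.prop.2.1.isCompact.image (hf.iterate i)).isClosed) hN.prop.2.1
      horbit.symm.subset (fun i _ => ?_) ?_
    · by_cases h : Disjoint (f^[i] '' N) N
      · exact Or.inr h
      · exact Or.inl (hN.image_iterate_eq_of_inter_nonempty hf hp
          (not_disjoint_iff_nonempty_inter.mp h)).subset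
    · obtain ⟨x, hx⟩ := hN.prop.1
      exact ⟨x, hNM hx, hx⟩
  exact hKM.antisymm (hMN.trans hNK)

end MinimalSet

theorem minimal_equals_boundaries_of_periodic_disk_general
    (f : T2 → T2) (hf : IsHomeomorph f)
    (M : Set T2) (hM : IsMinimalSet f M) (hMconn : IsConnected M)
    (D0 : Set T2) (hD0 : IsCCOf D0 Mᶜ) (hdisk : IsTopDisk D0)
    (p : ℕ) (hp : 1 ≤ p) (hper : f^[p] '' D0 = D0) :
    ∀ k < p, M = frontier (f^[k] '' D0) := by
  have hfrontier : IsNonemptyClosedInvariant f^[p] (frontier D0) := by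
    refine ⟨nonempty_frontier_iff.mpr ⟨hD0.nonempty, ?_⟩, isClosed_frontier, ?_⟩
    · obtain ⟨x, hx⟩ := hM.1
      exact fun h => hD0.subset (h ▸ mem_univ x) hx
    · rw [mapsTo_iff_image_subset, (hf.iterate p).image_frontier, hper]
  have hM_eq : frontier D0 = M := hM.eq_of_isNonemptyClosedInvariant_iterate hf.continuous
    hMconn.isPreconnected hp hfrontier (hD0.frontier_subset hdisk.1)
  intro k _
  rw [← (hf.iterate k).image_frontier, hM_eq, hM.image_iterate_eq]

/-- If a connected minimal set `M` of a torus homeomorphism has a periodic bounded disk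
`D₀` of period `p` among the connected components of `Mᶜ`, then `M` coincides with the
boundary of each of the disks `D_k = f^k(D₀)`, `k = 0, …, p-1`. -/
theorem minimal_equals_boundaries_of_periodic_disk
    (f : T2 → T2) (hf : IsHomeomorph f)
    (M : Set T2) (hM : IsMinimalSet f M) (hMconn : IsConnected M)
    (D0 : Set T2) (hD0 : IsCCOf D0 Mᶜ) (hdisk : IsTopDisk D0) (hbdd : BoundedLift D0)
    (p : ℕ) (hp : 1 ≤ p) (hper : f^[p] '' D0 = D0)
    (hpmin : ∀ k : ℕ, 1 ≤ k → k < p → f^[k] '' D0 ≠ D0) :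
    ∀ k < p, M = frontier (f^[k] '' D0) :=
  minimal_equals_boundaries_of_periodic_disk_general f hf M hM hMconn D0 hD0 hdisk p hp hper

end
end

section
/- Let A ⊆ 𝕋² be a domain (open connected set) which is locally homotopically trivial, i.e. every loop contained in A which is homotopically trivial in 𝕋² is also homotopically trivial in A. Then every connected component of π⁻¹(A) ⊆ ℝ² is simply connected. -/
open Set Topology Filter

noncomputable section

open unitInterval

/-- local inverse of the circle projection, with values in `[-1/2, 1/2)`. -/
def circDelta : T1 → ℝ := fun w => ((AddCircle.equivIco 1 (-(1/2)) w : ℝ))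

lemma circDelta_coe (w : T1) : ((circDelta w : ℝ) : T1) = w :=
  (AddCircle.equivIco 1 (-(1/2))).symm_apply_apply w

lemma circDelta_continuousAt {w : T1} (hw : ‖w‖ < 1/2) : ContinuousAt circDelta w := by
  have hne : w ≠ (((-(1/2) : ℝ)) : T1) := by
    intro h
    have h2 : ‖(((-(1/2):ℝ)) : T1)‖ = |(-(1/2) : ℝ)| :=
      (AddCircle.norm_coe_eq_abs_iff 1 (by norm_num)).2
        (by rw [abs_neg, abs_of_nonneg]; norm_num; norm_num)
    rw [h, h2, abs_neg, abs_of_nonneg (by norm_num : (0:ℝ) ≤ 1/2)] at hw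
    norm_num at hw
  exact continuous_subtype_val.continuousAt.comp (AddCircle.continuousAt_equivIco 1 _ hne)

lemma const_of_coe_zero {X : Type*} [TopologicalSpace X] [PreconnectedSpace X]
    {c : X → ℝ} (hc : Continuous c) (h : ∀ t, ((c t : ℝ) : T1) = 0) (a b : X) : c a = c b := by
  have hint : ∀ t, ∃ n : ℤ, (n : ℝ) = c t := by
    intro t
    obtain ⟨n, hn⟩ := (AddCircle.coe_eq_zero_iff 1).1 (h t)
    exact ⟨n, by simpa using hn⟩
  by_contra hne
  have key : ∀ u v : X, c u < c v → False := by
    intro u v huv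
    obtain ⟨m, hm⟩ := hint u
    obtain ⟨m', hm'⟩ := hint v
    have hmm' : m < m' := by exact_mod_cast hm ▸ hm' ▸ huv
    have hmem : c u + 1/2 ∈ Icc (c u) (c v) := by
      constructor
      · linarith
      · rw [← hm, ← hm']
        have : (m : ℝ) + 1 ≤ m' := by exact_mod_cast hmm'
        linarith
    obtain ⟨t, ht⟩ := intermediate_value_univ u v hc hmem
    obtain ⟨k, hk⟩ := hint t
    rw [← hk, ← hm] at ht
    have : (2*k : ℝ) = 2*m + 1 := by linarith
    have : (2*k : ℤ) = 2*m + 1 := by exact_mod_cast this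
    omega
  rcases lt_trichotomy (c a) (c b) with h' | h' | h'
  · exact key a b h'
  · exact hne h'
  · exact key b a h'

lemma exists_lift_sq (h : C(I × I, T1)) :
    ∃ F : I × I → ℝ, Continuous F ∧ ∀ x, ((F x : ℝ) : T1) = h x := by
  obtain ⟨δ, hδ0, hδ⟩ := Metric.uniformContinuous_iff.mp
    (CompactSpace.uniformContinuous_of_continuous h.continuous) (1/4) (by norm_num)
  obtain ⟨n, hn⟩ := exists_nat_one_div_lt hδ0
  set N : ℕ := n + 1 with hN
  have hNpos : (0:ℝ) < N := by positivity
  set q : ℕ → ℝ := fun k => min ((k:ℝ)/N) 1 with hq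
  have hq0 : ∀ k, 0 ≤ q k := fun k => le_min (by positivity) zero_le_one
  have hq1 : ∀ k, q k ≤ 1 := fun k => min_le_right _ _
  have hqmono : ∀ k, q k ≤ q (k+1) := by
    intro k
    apply min_le_min _ le_rfl
    gcongr
    exact_mod_cast Nat.le_succ k
  have hqstep : ∀ k, q (k+1) - q k ≤ 1/N := by
    intro k
    rcases le_total ((k:ℝ)/N) 1 with hk | hk
    · have h1 : q k = (k:ℝ)/N := min_eq_left hk
      have h2 : q (k+1) ≤ ((k+1:ℕ):ℝ)/N := min_le_left _ _
      have hk1 : ((k+1:ℕ):ℝ) = (k:ℝ)+1 := by push_cast; ring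
      rw [hk1, add_div] at h2
      rw [h1]
      linarith
    · have h1 : q k = 1 := min_eq_right hk
      have h2 : q (k+1) ≤ 1 := hq1 _
      have : (0:ℝ) ≤ 1/N := by positivity
      rw [h1]; linarith
  have hmem : ∀ (k : ℕ) (t : I), q k * (t:ℝ) ∈ I :=
    fun k t => ⟨mul_nonneg (hq0 k) t.2.1, mul_le_one₀ (hq1 k) t.2.1 t.2.2⟩
  set sc : ℕ → I × I → I × I :=
    fun k x => (⟨q k * x.1, hmem k x.1⟩, ⟨q k * x.2, hmem k x.2⟩) with hsc
  have hsccont : ∀ k, Continuous (sc k) := by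
    intro k
    apply Continuous.prodMk
    · exact ((continuous_const.mul (continuous_subtype_val.comp continuous_fst)).subtype_mk _)
    · exact ((continuous_const.mul (continuous_subtype_val.comp continuous_snd)).subtype_mk _)
  have hq00 : q 0 = 0 := by simp [hq]
  have hqN : q N = 1 := by
    have : ((N:ℕ):ℝ)/N = 1 := div_self (ne_of_gt hNpos)
    simp [hq, this]
  have hsc0 : ∀ x, sc 0 x = ((0:I), (0:I)) := by
    intro x
    ext <;> simp [hsc, hq00]
  have hscN : ∀ x, sc N x = x := by
    intro x
    ext <;> simp [hsc, hqN]
  have hdist : ∀ (k : ℕ) (x : I × I), dist (h (sc (k+1) x)) (h (sc k x)) < 1/4 := by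
    intro k x
    apply hδ
    have key : ∀ t : I, dist (⟨q (k+1) * t, hmem _ t⟩ : I) (⟨q k * t, hmem _ t⟩ : I) < δ := by
      intro t
      rw [Subtype.dist_eq]
      have ht0 : (0:ℝ) ≤ t := t.2.1
      have ht1 : (t:ℝ) ≤ 1 := t.2.2
      have h1 : dist (q (k+1) * (t:ℝ)) (q k * t) = (q (k+1) - q k) * t := by
        rw [Real.dist_eq, ← sub_mul, abs_of_nonneg (mul_nonneg (by linarith [hqmono k]) ht0)]
      rw [h1]
      calc (q (k+1) - q k) * t ≤ (1/N) * 1 :=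
            mul_le_mul (hqstep k) ht1 ht0 (by positivity)
        _ = 1/((n:ℝ)+1) := by rw [mul_one]; norm_num [hN]
        _ < δ := hn
    rw [Prod.dist_eq]
    exact max_lt (key x.1) (key x.2)
  set g : ℕ → (I × I) → T1 := fun k x => h (sc k x) with hg
  have hnorm : ∀ k x, ‖g (k+1) x - g k x‖ < 1/2 := by
    intro k x
    have := hdist k x
    rw [dist_eq_norm] at this
    linarith
  set F0 : I × I → ℝ := fun x => ∑ k ∈ Finset.range N, circDelta (g (k+1) x - g k x) with hF0def
  have hFcont : Continuous F0 := by
    apply continuous_finset_sum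
    intro k _
    rw [continuous_iff_continuousAt]
    intro x
    have hinner : ContinuousAt (fun y => g (k+1) y - g k y) x :=
      ((h.continuous.comp (hsccont (k+1))).sub (h.continuous.comp (hsccont k))).continuousAt
    have hcomp : ContinuousAt (circDelta ∘ fun y => g (k+1) y - g k y) x :=
      ContinuousAt.comp (circDelta_continuousAt (hnorm k x)) hinner
    exact hcomp
  have hF0 : ∀ x, ((F0 x : ℝ) : T1) = h x - h ((0:I),(0:I)) := by
    intro x
    have hsum : ((F0 x : ℝ) : T1)
        = ∑ k ∈ Finset.range N, ((circDelta (g (k+1) x - g k x) : ℝ) : T1) :=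
      map_sum (QuotientAddGroup.mk' (AddSubgroup.zmultiples (1:ℝ))) _ _
    rw [hsum]
    simp only [circDelta_coe]
    rw [Finset.sum_range_sub (fun k => g k x) N]
    rw [hg]
    simp only [hscN, hsc0]
  obtain ⟨r0, hr0⟩ := QuotientAddGroup.mk_surjective (h ((0:I),(0:I)))
  refine ⟨fun x => F0 x + r0, hFcont.add continuous_const, fun x => ?_⟩
  have hadd : ((F0 x + r0 : ℝ) : T1) = ((F0 x : ℝ) : T1) + ((r0 : ℝ) : T1) :=
    map_add (QuotientAddGroup.mk' (AddSubgroup.zmultiples (1:ℝ))) _ _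
  rw [hadd, hF0, hr0]
  abel

lemma proj_continuous : Continuous proj := by
  unfold proj
  exact (continuous_quotient_mk'.comp continuous_fst).prodMk
    (continuous_quotient_mk'.comp continuous_snd)

lemma coe_sub' (a b : ℝ) : ((a - b : ℝ) : T1) = ((a:ℝ):T1) - ((b:ℝ):T1) := by norm_cast

lemma proj_sub_zero {a b : R2} (h : proj a = proj b) :
    (((a.1 - b.1 : ℝ)) : T1) = 0 ∧ (((a.2 - b.2 : ℝ)) : T1) = 0 := by
  have h1 : ((a.1 : ℝ) : T1) = ((b.1 : ℝ) : T1) := congrArg Prod.fst h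
  have h2 : ((a.2 : ℝ) : T1) = ((b.2 : ℝ) : T1) := congrArg Prod.snd h
  constructor
  · rw [coe_sub']
    exact sub_eq_zero.2 h1
  · rw [coe_sub']
    exact sub_eq_zero.2 h2

lemma proj_sub_eq {a v : R2} (h1 : ((v.1 : ℝ) : T1) = 0) (h2 : ((v.2 : ℝ) : T1) = 0) :
    proj (a - v) = proj a := by
  unfold proj
  have e1 : (((a - v).1 : ℝ) : T1) = ((a.1 : ℝ) : T1) := by
    rw [show (a - v).1 = a.1 - v.1 from rfl, coe_sub', h1, sub_zero]
  have e2 : (((a - v).2 : ℝ) : T1) = ((a.2 : ℝ) : T1) := by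
    rw [show (a - v).2 = a.2 - v.2 from rfl, coe_sub', h2, sub_zero]
  exact Prod.ext e1 e2

lemma sub_const_of_proj_eq {X : Type*} [TopologicalSpace X] [PreconnectedSpace X]
    {c d : X → R2} (hc : Continuous c) (hd : Continuous d)
    (h : ∀ t, proj (c t) = proj (d t)) (a b : X) : c a - d a = c b - d b := by
  have e1 := const_of_coe_zero (c := fun t => (c t - d t).1)
    ((hc.sub hd).fst) (fun t => (proj_sub_zero (h t)).1) a b
  have e2 := const_of_coe_zero (c := fun t => (c t - d t).2)
    ((hc.sub hd).snd) (fun t => (proj_sub_zero (h t)).2) a b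
  exact Prod.ext e1 e2

/-- If a domain `A ⊆ 𝕋²` is locally homotopically trivial (every loop in `A` which is
homotopically trivial in `𝕋²` is homotopically trivial in `A`), then every connected
component of `π⁻¹(A) ⊆ ℝ²` is simply connected. -/
theorem lifted_components_simply_connected
    (A : Set T2) (hopen : IsOpen A) (hconn : IsConnected A)
    (hlht : ∀ (x : A) (γ : Path x x),
      (γ.map continuous_subtype_val).Homotopic (Path.refl (x : T2)) →
      γ.Homotopic (Path.refl x)) :
    ∀ z ∈ proj ⁻¹' A,
      SimplyConnectedSpace ↥(connectedComponentIn (proj ⁻¹' A) z) := by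
  intro z hz
  set S : Set R2 := proj ⁻¹' A with hSdef
  have hSopen : IsOpen S := hopen.preimage proj_continuous
  set U := connectedComponentIn S z with hUdef
  have hUopen : IsOpen U := hSopen.connectedComponentIn
  have hUconn : IsConnected U := isConnected_connectedComponentIn_iff.2 hz
  have hUS : U ⊆ S := connectedComponentIn_subset _ _
  -- key: every loop in U is null-homotopic in U
  have key : ∀ (x : ↥U) (γ : Path x x), γ.Homotopic (Path.refl x) := by
    intro x γ
    have hxA : proj (x : R2) ∈ A := hUS x.2
    set xA : ↥A := ⟨proj (x : R2), hxA⟩ with hxAdef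
    have hqcont : Continuous (fun u : ↥U => (⟨proj (u : R2), hUS u.2⟩ : ↥A)) :=
      (proj_continuous.comp continuous_subtype_val).subtype_mk _
    set γA : Path xA xA := γ.map hqcont with hγAdef
    -- null-homotopy of the projected loop in T2
    have hγT2 : (γA.map continuous_subtype_val).Homotopic (Path.refl (xA : T2)) := by
      have hR : (γ.map continuous_subtype_val).Homotopic (Path.refl ((x : ↥U) : R2)) :=
        SimplyConnectedSpace.paths_homotopic _ _
      have hmapped := hR.map ⟨proj, proj_continuous⟩
      have e1 : γA.map continuous_subtype_val
          = (γ.map continuous_subtype_val).map proj_continuous := by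
        rw [hγAdef, Path.map_map, Path.map_map]
      have e2 : (Path.refl ((x : ↥U) : R2)).map proj_continuous = Path.refl (xA : T2) := by
        ext t <;> rfl
      rw [e1, ← e2]
      exact hmapped
    have hA : γA.Homotopic (Path.refl xA) := hlht xA γA hγT2
    obtain ⟨H⟩ := hA
    -- component-wise lifts of the homotopy
    set h1c : C(I × I, T1) := ⟨fun p => ((H p : ↥A) : T2).1,
      continuous_fst.comp (continuous_subtype_val.comp H.continuous)⟩ with hh1c
    set h2c : C(I × I, T1) := ⟨fun p => ((H p : ↥A) : T2).2,
      continuous_snd.comp (continuous_subtype_val.comp H.continuous)⟩ with hh2c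
    obtain ⟨F₁, hF₁c, hF₁⟩ := exists_lift_sq h1c
    obtain ⟨F₂, hF₂c, hF₂⟩ := exists_lift_sq h2c
    set G : I × I → R2 := fun p => (F₁ p, F₂ p) with hGdef
    have hGc : Continuous G := hF₁c.prodMk hF₂c
    have hGproj : ∀ p, proj (G p) = ((H p : ↥A) : T2) := fun p => Prod.ext (hF₁ p) (hF₂ p)
    have hproj0 : ∀ t : I, proj (G (0, t)) = proj ((γ t : ↥U) : R2) := by
      intro t
      rw [hGproj (0, t), H.apply_zero t]
      rfl
    have hd := sub_const_of_proj_eq (c := fun t : I => G (0, t))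
      (d := fun t : I => ((γ t : ↥U) : R2))
      (hGc.comp (continuous_const.prodMk continuous_id))
      (continuous_subtype_val.comp γ.continuous) hproj0
    set v : R2 := G (0, 0) - ((γ 0 : ↥U) : R2) with hvdef
    have hvcoe := proj_sub_zero (hproj0 0)
    set G' : I × I → R2 := fun p => G p - v with hG'def
    have hG'c : Continuous G' := hGc.sub continuous_const
    have hG'proj : ∀ p, proj (G' p) = ((H p : ↥A) : T2) := by
      intro p
      show proj (G p - v) = _
      rw [proj_sub_eq hvcoe.1 hvcoe.2]
      exact hGproj p
    have hG'S : ∀ p, G' p ∈ S := fun p => by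
      show proj (G' p) ∈ A
      rw [hG'proj p]
      exact (H p).2
    have hG'0 : ∀ t, G' (0, t) = ((γ t : ↥U) : R2) := by
      intro t
      show G (0, t) - v = _
      rw [hvdef, ← hd t 0]
      exact sub_sub_cancel _ _
    have hγ0 : ((γ 0 : ↥U) : R2) = ((x : ↥U) : R2) := by rw [γ.source]
    have hγ1 : ((γ 1 : ↥U) : R2) = ((x : ↥U) : R2) := by rw [γ.target]
    have hb0 : ∀ s : I, G' (s, 0) = ((x : ↥U) : R2) := by
      have hpr : ∀ s : I, proj (G' (s, 0)) = proj ((x : ↥U) : R2) := by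
        intro s
        rw [hG'proj (s, 0), Path.Homotopy.source H s]
      intro s
      have h2 := sub_const_of_proj_eq (c := fun s : I => G' (s, 0))
        (d := fun _ => ((x : ↥U) : R2))
        (hG'c.comp (continuous_id.prodMk continuous_const)) continuous_const hpr s 0
      have h00 : G' (0, 0) = ((x : ↥U) : R2) := by rw [hG'0 0, hγ0]
      rw [h00, sub_self] at h2
      exact sub_eq_zero.1 h2
    have hb1 : ∀ s : I, G' (s, 1) = ((x : ↥U) : R2) := by
      have hpr : ∀ s : I, proj (G' (s, 1)) = proj ((x : ↥U) : R2) := by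
        intro s
        rw [hG'proj (s, 1), Path.Homotopy.target H s]
      intro s
      have h2 := sub_const_of_proj_eq (c := fun s : I => G' (s, 1))
        (d := fun _ => ((x : ↥U) : R2))
        (hG'c.comp (continuous_id.prodMk continuous_const)) continuous_const hpr s 0
      have h01 : G' (0, 1) = ((x : ↥U) : R2) := by rw [hG'0 1, hγ1]
      rw [h01, sub_self] at h2
      exact sub_eq_zero.1 h2
    have hb2 : ∀ t : I, G' (1, t) = ((x : ↥U) : R2) := by
      have hpr : ∀ t : I, proj (G' (1, t)) = proj ((x : ↥U) : R2) := by
        intro t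
        rw [hG'proj (1, t), H.apply_one t]
        rfl
      intro t
      have h2 := sub_const_of_proj_eq (c := fun t : I => G' (1, t))
        (d := fun _ => ((x : ↥U) : R2))
        (hG'c.comp (continuous_const.prodMk continuous_id)) continuous_const hpr t 0
      have h10 : G' (1, 0) = ((x : ↥U) : R2) := hb0 1
      rw [h10, sub_self] at h2
      exact sub_eq_zero.1 h2
    have hxrange : ((x : ↥U) : R2) ∈ range G' := ⟨(0, 0), by rw [hG'0 0, hγ0]⟩
    have hrange : range G' ⊆ U := by
      have hpre : IsPreconnected (range G') := isPreconnected_range hG'c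
      have hsub : range G' ⊆ S := by
        rintro _ ⟨p, rfl⟩
        exact hG'S p
      have hr := hpre.subset_connectedComponentIn hxrange hsub
      have heq : connectedComponentIn S z = connectedComponentIn S ((x : ↥U) : R2) :=
        connectedComponentIn_eq x.2
      rw [← heq] at hr
      exact hr
    refine ⟨⟨⟨⟨fun p => ⟨G' p, hrange ⟨p, rfl⟩⟩, hG'c.subtype_mk _⟩, ?_, ?_⟩, ?_⟩⟩
    · intro t
      exact Subtype.ext (hG'0 t)
    · intro t
      exact Subtype.ext (hb2 t)
    · intro s t ht
      rcases ht with h | h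
      · subst h
        refine Subtype.ext ?_
        show G' (s, 0) = _
        rw [hb0 s]
        exact hγ0.symm
      · rw [mem_singleton_iff] at h
        subst h
        refine Subtype.ext ?_
        show G' (s, 1) = _
        rw [hb1 s]
        exact hγ1.symm
  rw [simply_connected_iff_paths_homotopic']
  constructor
  · exact isPathConnected_iff_pathConnectedSpace.1
      (hUopen.isConnected_iff_isPathConnected.1 hUconn)
  · intro x y p₁ p₂
    have h1 : (p₁.trans p₂.symm).Homotopic (Path.refl x) := key x _
    have h_a : p₁.Homotopic (p₁.trans (Path.refl y)) := ⟨(Path.Homotopy.transRefl p₁).symm⟩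
    have h_b : (p₁.trans (Path.refl y)).Homotopic (p₁.trans (p₂.symm.trans p₂)) :=
      Path.Homotopic.hcomp (Path.Homotopic.refl p₁) ⟨Path.Homotopy.reflSymmTrans p₂⟩
    have h_c : (p₁.trans (p₂.symm.trans p₂)).Homotopic ((p₁.trans p₂.symm).trans p₂) :=
      ⟨(Path.Homotopy.transAssoc p₁ p₂.symm p₂).symm⟩
    have h_d : ((p₁.trans p₂.symm).trans p₂).Homotopic ((Path.refl x).trans p₂) :=
      Path.Homotopic.hcomp h1 (Path.Homotopic.refl p₂)
    have h_e : ((Path.refl x).trans p₂).Homotopic p₂ := ⟨Path.Homotopy.reflTrans p₂⟩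
    exact (((h_a.trans h_b).trans h_c).trans h_d).trans h_e

end
end

section
/- Suppose {Eₙ}_{n∈ℕ} ⊆ 𝔸 is a bounded sequence of essential continua with Eₙ ≺ E_{n+1} for all n ∈ ℕ. Then the sets Eₙ converge in Hausdorff distance to the essential continuum ∂𝒰⁻, where 𝒰⁻ = ⋃_{n∈ℕ} 𝒰⁻(Eₙ). -/
open Set Topology Filter

noncomputable section

/-- A subset `A ⊆ 𝔸` is essential if no connected component of its complement is
unbounded both above and below. -/
def EssentialA (A : Set Ann) : Prop :=
  ∀ z ∈ Aᶜ, ¬ (UnbAbove (connectedComponentIn Aᶜ z) ∧ UnbBelow (connectedComponentIn Aᶜ z))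

/-- A subset of the annulus which is bounded above. -/
def BddAboveA (A : Set Ann) : Prop := ∃ r : ℝ, ∀ z ∈ A, z.2 ≤ r

/-- `𝒰⁺(A)`: the connected component of `𝔸 \ Cl(A)` which is unbounded above
(realised as the union of all such components, which is a single component under the
standing assumptions). -/
def Uplus (A : Set Ann) : Set Ann :=
  {z | z ∉ closure A ∧ UnbAbove (connectedComponentIn (closure A)ᶜ z)}

/-- `𝒰⁻(A)`: the connected component of `𝔸 \ Cl(A)` which is unbounded below. -/
def Uminus (A : Set Ann) : Set Ann :=
  {z | z ∉ closure A ∧ UnbBelow (connectedComponentIn (closure A)ᶜ z)}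

/-- The upper frontier `𝒞⁺(A) = 𝔸 \ (𝒰^{+-}(A) ∪ 𝒰^{+-+}(A))` of an essential set
bounded above; it is a circloid. -/
def CplusA (A : Set Ann) : Set Ann := (Uminus (Uplus A) ∪ Uplus (Uminus (Uplus A)))ᶜ


/-!
The sets `𝒰⁻(Eₙ)` increase (for `E ≺ F` between essential continua, `𝒰⁻(E) ⊆ 𝒰⁻(F)`, since
`F ⊆ 𝒰⁻(E)` would put the top of each set strictly below the top of the other) to an open set
`𝒰⁻` that contains a lower half-annulus `{y < c}` and lies below the top of `Ehi`; so
`∂𝒰⁻ ⊆ Cl(𝒰⁻) \ 𝒰⁻(E₀)` lies in a compact band. The part of that band at distance `≥ ε` from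
`∂𝒰⁻` is a compact subset of `𝒰⁻`, hence of some `𝒰⁻(E_N)`; the later `Eₙ`, which avoid
`𝒰⁻(Eₙ)`, are therefore `ε`-close to `∂𝒰⁻`. Conversely, a small connected neighbourhood of a
point of `∂𝒰⁻` meets some `𝒰⁻(E_m)` without lying in `𝒰⁻`, so it meets every later `Eₙ`.
Connectedness passes to the Hausdorff limit, and `∂𝒰⁻` is essential because its complement is
the union of the interior of `𝒰⁻` (bounded above) and that of its complement (bounded below).
-/

open Metric

instance AddCircle.instLocallyConnectedSpace (p : ℝ) : LocallyConnectedSpace (AddCircle p) :=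
  (QuotientAddGroup.isQuotientMap_mk _).isCoinducing.locallyConnectedSpace

section HausdorffConvergence

variable {α ι : Type*} [PseudoMetricSpace α]

/-- Hausdorff convergence `K i → L`, stated without `hausdorffDist`, which takes the junk value `0`
when a set is empty or the Hausdorff edistance is infinite. -/
def HausdorffTendsto (K : ι → Set α) (l : Filter ι) (L : Set α) : Prop :=
  ∀ ε > 0, ∀ᶠ i in l, K i ⊆ thickening ε L ∧ L ⊆ thickening ε (K i)

theorem HausdorffTendsto.tendsto_hausdorffDist {K : ι → Set α} {l : Filter ι} {L : Set α}
    (h : HausdorffTendsto K l L) : Tendsto (fun i => hausdorffDist (K i) L) l (𝓝 0) := by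
  refine Metric.tendsto_nhds.2 fun ε hε => (h (ε / 2) (half_pos hε)).mono fun i ⟨hKL, hLK⟩ => ?_
  have hle : hausdorffDist (K i) L ≤ ε / 2 := by
    refine hausdorffDist_le_of_mem_dist (half_pos hε).le (fun x hx => ?_) (fun x hx => ?_)
    · obtain ⟨y, hy, hxy⟩ := mem_thickening_iff.1 (hKL hx)
      exact ⟨y, hy, hxy.le⟩
    · obtain ⟨y, hy, hxy⟩ := mem_thickening_iff.1 (hLK hx)
      exact ⟨y, hy, hxy.le⟩
  rw [Real.dist_eq, sub_zero, abs_of_nonneg hausdorffDist_nonneg]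
  linarith

theorem HausdorffTendsto.isPreconnected [T2Space α] {K : ι → Set α} {l : Filter ι} [l.NeBot]
    {L : Set α} (h : HausdorffTendsto K l L) (hL : IsCompact L) (hK : ∀ i, IsPreconnected (K i)) :
    IsPreconnected L := by
  refine (isPreconnected_iff_subset_of_fully_disjoint_closed hL.isClosed).2
    fun u v hu hv hLuv huv => ?_
  obtain ⟨δ, hδ, hdisj⟩ := (huv.mono inter_subset_right inter_subset_right).exists_thickenings
    (hL.inter_right hu) (hL.isClosed.inter hv)
  obtain ⟨i, hKL, hLK⟩ := (h δ hδ).exists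
  have hKi : K i ⊆ thickening δ (L ∩ u) ∪ thickening δ (L ∩ v) := by
    rw [← thickening_union, ← inter_union_distrib_left, inter_eq_left.2 hLuv]
    exact hKL
  -- A point of `L` on the wrong side would be `δ`-close to a point of `K i` on the other one.
  have hside : ∀ {s t : Set α}, Disjoint (thickening δ s) (thickening δ t) →
      K i ⊆ thickening δ s → ∀ x ∈ L, x ∉ t := by
    intro s t hst hKs x hxL hxt
    obtain ⟨y, hy, hxy⟩ := mem_thickening_iff.1 (hLK hxL)
    exact hst.notMem_of_mem_left (hKs hy)
      (mem_thickening_iff.2 ⟨x, hxt, by rwa [dist_comm]⟩)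
  rcases (hK i).subset_or_subset isOpen_thickening isOpen_thickening hdisj hKi with hs | ht
  · exact Or.inl fun x hx => (hLuv hx).resolve_right fun hxv => hside hdisj hs x hx ⟨hx, hxv⟩
  · exact Or.inr fun x hx => (hLuv hx).resolve_left fun hxu =>
      hside hdisj.symm ht x hx ⟨hx, hxu⟩

theorem IsCompact.eventually_subset_thickening {K : ι → Set α} {l : Filter ι} {L : Set α}
    (hL : IsCompact L) (h : ∀ x ∈ L, ∀ ε > 0, ∀ᶠ i in l, x ∈ thickening ε (K i)) :
    ∀ ε > 0, ∀ᶠ i in l, L ⊆ thickening ε (K i) := by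
  intro ε hε
  obtain ⟨t, htL, hLt⟩ := hL.elim_nhds_subcover (fun x => ball x (ε / 2))
    fun x _ => ball_mem_nhds x (half_pos hε)
  filter_upwards [t.eventually_all.2 fun x hx => h x (htL x hx) (ε / 2) (half_pos hε)]
    with i hi y hy
  obtain ⟨x, hx, hyx⟩ := mem_iUnion₂.1 (hLt hy)
  obtain ⟨z, hz, hxz⟩ := mem_thickening_iff.1 (hi x hx)
  refine mem_thickening_iff.2 ⟨z, hz, ?_⟩
  calc dist y z ≤ dist y x + dist x z := dist_triangle y x z
    _ < ε / 2 + ε / 2 := add_lt_add (mem_ball.1 hyx) hxz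
    _ = ε := add_halves ε

end HausdorffConvergence

section IncreasingUnion

variable {α : Type*} [PseudoMetricSpace α] {V E : ℕ → Set α}

theorem eventually_subset_thickening_frontier_iUnion (hV : Monotone V)
    (hVo : ∀ n, IsOpen (V n)) (hcpt : IsCompact (closure (⋃ n, V n) \ V 0))
    (hEU : ∀ n, E n ⊆ closure (⋃ n, V n)) (hEV : ∀ n, Disjoint (E n) (V n)) :
    ∀ ε > 0, ∀ᶠ n in atTop, E n ⊆ thickening ε (frontier (⋃ n, V n)) := by
  intro ε hε
  set U := ⋃ n, V n
  -- The part of `closure U` away from `frontier U` lies in `U`, hence by compactness in some `V N`.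
  have hKU : (closure U \ V 0) \ thickening ε (frontier U) ⊆ U := fun x ⟨⟨hxU, _⟩, hxF⟩ =>
    interior_subset (by
      rw [← closure_sdiff_frontier]
      exact ⟨hxU, fun h => hxF (self_subset_thickening hε _ h)⟩)
  obtain ⟨N, hN⟩ := (hcpt.diff isOpen_thickening).elim_directed_cover V hVo hKU hV.directed_le
  filter_upwards [eventually_ge_atTop N] with n hn x hx
  by_contra hxF
  have hxV : x ∉ V n := Disjoint.notMem_of_mem_left (hEV n) hx
  exact hxV (hV hn (hN ⟨⟨hEU n hx, fun h => hxV (hV (Nat.zero_le n) h)⟩, hxF⟩))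

theorem eventually_mem_thickening_of_mem_frontier_iUnion [LocallyConnectedSpace α]
    (hV : Monotone V) (hVE : ∀ n, ∃ z, V n = connectedComponentIn (E n)ᶜ z)
    {x : α} (hx : x ∈ frontier (⋃ n, V n)) : ∀ ε > 0, ∀ᶠ n in atTop, x ∈ thickening ε (E n) := by
  intro ε hε
  set B := connectedComponentIn (ball x ε) x
  have hB : B ∈ 𝓝 x := connectedComponentIn_mem_nhds (ball_mem_nhds x hε)
  obtain ⟨w, hwB, hwU⟩ := mem_closure_iff_nhds.1 hx.1 B hB
  obtain ⟨m, hwm⟩ := mem_iUnion.1 hwU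
  filter_upwards [eventually_ge_atTop m] with n hn
  by_contra hxE
  -- Otherwise the connected neighbourhood `B` of `x` avoids `E n`, so lies in `V n` and `x` would
  -- be an interior point of the union.
  have hBE : B ⊆ (E n)ᶜ := fun y hyB hyE => hxE <| mem_thickening_iff.2
    ⟨y, hyE, by rw [dist_comm]; exact mem_ball.1 (connectedComponentIn_subset _ _ hyB)⟩
  obtain ⟨z, hz⟩ := hVE n
  have hBV : B ⊆ V n := by
    rw [hz, connectedComponentIn_eq (hz ▸ hV hn hwm)]
    exact isPreconnected_connectedComponentIn.subset_connectedComponentIn hwB hBE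
  exact hx.2 (mem_interior_iff_mem_nhds.2 (mem_of_superset hB
    (hBV.trans (subset_iUnion V n))))

end IncreasingUnion

section Band

variable {X : Type*} [TopologicalSpace X]

theorem isPreconnected_setOf_snd_lt [PreconnectedSpace X] (r : ℝ) :
    IsPreconnected {z : X × ℝ | z.2 < r} := by
  have h := (isPreconnected_univ (α := X)).prod (isPreconnected_Iio (a := r))
  rwa [univ_prod] at h

theorem isPreconnected_setOf_lt_snd [PreconnectedSpace X] (r : ℝ) :
    IsPreconnected {z : X × ℝ | r < z.2} := by
  have h := (isPreconnected_univ (α := X)).prod (isPreconnected_Ioi (a := r))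
  rwa [univ_prod] at h

theorem isCompact_closure_sdiff_of_bounds [CompactSpace X] {U V : Set (X × ℝ)} {c R : ℝ}
    (hV : IsOpen V) (hU : ∀ z ∈ U, z.2 ≤ R) (hc : {z : X × ℝ | z.2 < c} ⊆ V) :
    IsCompact (closure U \ V) := by
  refine (isCompact_univ.prod (isCompact_Icc (a := c) (b := R))).of_isClosed_subset
    (isClosed_closure.sdiff hV) fun z ⟨hzU, hzV⟩ => ⟨mem_univ _, ?_, ?_⟩
  · exact not_lt.1 fun h => hzV (hc h)
  · exact closure_minimal hU (isClosed_le continuous_snd continuous_const) hzU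

theorem IsCompact.exists_forall_le_snd {E : Set (X × ℝ)} (hE : IsCompact E) :
    ∃ r, ∀ w ∈ E, r ≤ w.2 := by
  obtain ⟨r, hr⟩ := (hE.image continuous_snd).bddBelow
  exact ⟨r, fun w hw => hr (mem_image_of_mem _ hw)⟩

end Band

section Annulus

variable {E F : Set Ann} {r s : ℝ}

theorem unbBelow_of_setOf_snd_lt_subset {S : Set Ann} (h : {z : Ann | z.2 < r} ⊆ S) :
    UnbBelow S := fun t =>
  ⟨((0 : T1), min t r - 1), h (show min t r - 1 < r by linarith [min_le_right t r]),
    show min t r - 1 < t by linarith [min_le_left t r]⟩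

theorem unbAbove_of_setOf_lt_snd_subset {S : Set Ann} (h : {z : Ann | s < z.2} ⊆ S) :
    UnbAbove S := fun t =>
  ⟨((0 : T1), max t s + 1), h (show s < max t s + 1 by linarith [le_max_right t s]),
    show t < max t s + 1 by linarith [le_max_left t s]⟩

theorem setOf_snd_lt_subset_connectedComponentIn (hr : ∀ w ∈ E, r ≤ w.2) {z : Ann}
    (hz : z.2 < r) : {w : Ann | w.2 < r} ⊆ connectedComponentIn Eᶜ z :=
  (isPreconnected_setOf_snd_lt r).subset_connectedComponentIn hz
    fun w hw hwE => (hr w hwE).not_gt hw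

theorem setOf_lt_snd_subset_connectedComponentIn (hs : ∀ w ∈ E, w.2 ≤ s) {z : Ann}
    (hz : s < z.2) : {w : Ann | s < w.2} ⊆ connectedComponentIn Eᶜ z :=
  (isPreconnected_setOf_lt_snd s).subset_connectedComponentIn hz
    fun w hw hwE => (hs w hwE).not_gt hw

theorem Uminus_eq_connectedComponentIn (hE : IsClosed E) (hr : ∀ w ∈ E, r ≤ w.2) {z : Ann}
    (hz : z.2 < r) : Uminus E = connectedComponentIn Eᶜ z := by
  have htube := setOf_snd_lt_subset_connectedComponentIn hr hz
  ext w
  simp only [Uminus, hE.closure_eq, mem_ofPred_eq]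
  constructor
  · rintro ⟨hwE, hw⟩
    obtain ⟨p, hp, hpr⟩ := hw r
    rw [connectedComponentIn_eq (htube hpr), ← connectedComponentIn_eq hp]
    exact mem_connectedComponentIn hwE
  · intro hw
    refine ⟨connectedComponentIn_subset _ _ hw, ?_⟩
    rw [← connectedComponentIn_eq hw]
    exact unbBelow_of_setOf_snd_lt_subset htube

theorem setOf_snd_lt_subset_Uminus (hE : IsClosed E) (hr : ∀ w ∈ E, r ≤ w.2) :
    {z : Ann | z.2 < r} ⊆ Uminus E := fun z hz =>
  Uminus_eq_connectedComponentIn hE hr hz ▸ mem_connectedComponentIn fun hzE =>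
    (hr z hzE).not_gt hz

theorem IsCompact.exists_Uminus_eq_connectedComponentIn (hE : IsCompact E) :
    ∃ z, Uminus E = connectedComponentIn Eᶜ z := by
  obtain ⟨r, hr⟩ := hE.exists_forall_le_snd
  exact ⟨((0 : T1), r - 1), Uminus_eq_connectedComponentIn hE.isClosed hr (sub_one_lt r)⟩

theorem IsCompact.exists_setOf_snd_lt_subset_Uminus (hE : IsCompact E) :
    ∃ r, {z : Ann | z.2 < r} ⊆ Uminus E := by
  obtain ⟨r, hr⟩ := hE.exists_forall_le_snd
  exact ⟨r, setOf_snd_lt_subset_Uminus hE.isClosed hr⟩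

theorem isOpen_Uminus (hE : IsCompact E) : IsOpen (Uminus E) := by
  obtain ⟨z, hz⟩ := hE.exists_Uminus_eq_connectedComponentIn
  exact hz ▸ hE.isClosed.isOpen_compl.connectedComponentIn

theorem isPreconnected_Uminus (hE : IsCompact E) : IsPreconnected (Uminus E) := by
  obtain ⟨z, hz⟩ := hE.exists_Uminus_eq_connectedComponentIn
  exact hz ▸ isPreconnected_connectedComponentIn

theorem disjoint_Uminus (E : Set Ann) : Disjoint E (Uminus E) :=
  disjoint_right.2 fun _ hz hzE => hz.1 (subset_closure hzE)

theorem subset_Uminus (hE : IsCompact E) {C : Set Ann} (hC : IsPreconnected C)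
    (hCE : Disjoint C E) (hCU : (C ∩ Uminus E).Nonempty) : C ⊆ Uminus E := by
  obtain ⟨z, hz⟩ := hE.exists_Uminus_eq_connectedComponentIn
  obtain ⟨w, hwC, hwU⟩ := hCU
  rw [hz] at hwU ⊢
  rw [connectedComponentIn_eq hwU]
  exact hC.subset_connectedComponentIn hwC hCE.subset_compl_right

theorem Uminus_subset_setOf_snd_lt (hE : IsClosed E) (hess : EssentialA E)
    (hs : ∀ w ∈ E, w.2 ≤ s) : Uminus E ⊆ {z : Ann | z.2 < s} := by
  rintro z ⟨hzE, hbelow⟩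
  rw [hE.closure_eq] at hzE hbelow
  by_contra hzs
  have hsz : s ≤ z.2 := not_lt.1 hzs
  -- The component of `z` is open, so it reaches strictly above `E` and thus contains everything
  -- above `E`.
  obtain ⟨δ, hδ, hball⟩ := Metric.isOpen_iff.1 hE.isOpen_compl.connectedComponentIn z
    (mem_connectedComponentIn hzE)
  have hw : (z.1, z.2 + δ / 2) ∈ connectedComponentIn Eᶜ z :=
    hball (by simp [Prod.dist_eq, abs_of_pos hδ, hδ])
  refine hess z hzE ⟨?_, hbelow⟩
  rw [connectedComponentIn_eq hw]
  exact unbAbove_of_setOf_lt_snd_subset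
    (setOf_lt_snd_subset_connectedComponentIn hs (by dsimp only; linarith))

theorem IsCompact.exists_Uminus_subset_setOf_snd_lt (hE : IsCompact E) (hne : E.Nonempty)
    (hess : EssentialA E) : ∃ e ∈ E, Uminus E ⊆ {z : Ann | z.2 < e.2} := by
  obtain ⟨e, he, hmax⟩ := hE.exists_isMaxOn hne continuous_snd.continuousOn
  exact ⟨e, he, Uminus_subset_setOf_snd_lt hE.isClosed hess (isMaxOn_iff.1 hmax)⟩

theorem not_subset_Uminus_of_subset_Uminus (hE : IsCompact E) (hEne : E.Nonempty)
    (hEess : EssentialA E) (hF : IsCompact F) (hFne : F.Nonempty) (hFess : EssentialA F)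
    (hEF : E ⊆ Uminus F) : ¬F ⊆ Uminus E := by
  intro hFE
  obtain ⟨e, he, hEe⟩ := hE.exists_Uminus_subset_setOf_snd_lt hEne hEess
  obtain ⟨f, hf, hFf⟩ := hF.exists_Uminus_subset_setOf_snd_lt hFne hFess
  exact lt_asymm (show e.2 < f.2 from hFf (hEF he)) (hEe (hFE hf))

theorem Uminus_mono (hE : IsCompact E) (hEne : E.Nonempty) (hEess : EssentialA E)
    (hF : IsCompact F) (hFc : IsConnected F) (hFess : EssentialA F) (hEF : E ⊆ Uminus F) :
    Uminus E ⊆ Uminus F := by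
  have hFE : Disjoint F (Uminus E) := by
    by_contra h
    exact not_subset_Uminus_of_subset_Uminus hE hEne hEess hF hFc.nonempty hFess hEF
      (subset_Uminus hE hFc.isPreconnected ((disjoint_Uminus F).mono_right hEF)
        (not_disjoint_iff_nonempty_inter.1 h))
  obtain ⟨r₁, h₁⟩ := hE.exists_setOf_snd_lt_subset_Uminus
  obtain ⟨r₂, h₂⟩ := hF.exists_setOf_snd_lt_subset_Uminus
  have hlow : ((0 : T1), min r₁ r₂ - 1).2 < min r₁ r₂ := sub_one_lt _
  exact subset_Uminus hF (isPreconnected_Uminus hE) hFE.symm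
    ⟨_, h₁ (hlow.trans_le (min_le_left _ _)), h₂ (hlow.trans_le (min_le_right _ _))⟩

theorem essentialA_frontier {U : Set Ann} {c : ℝ} (hU : BddAboveA U)
    (hc : {z : Ann | z.2 < c} ⊆ U) : EssentialA (frontier U) := by
  rintro z - ⟨habove, hbelow⟩
  obtain ⟨R, hR⟩ := hU
  rcases isPreconnected_connectedComponentIn.subset_or_subset isOpen_interior isOpen_interior
      (disjoint_compl_right.mono interior_subset interior_subset)
      ((connectedComponentIn_subset _ z).trans compl_frontier_eq_union_interior.subset) with h | h
  · obtain ⟨w, hw, hRw⟩ := habove R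
    exact (hR w (interior_subset (h hw))).not_gt hRw
  · obtain ⟨w, hw, hwc⟩ := hbelow c
    exact interior_subset (h hw) (hc hwc)

end Annulus

/-- A bounded increasing (with respect to `≺`) sequence of essential continua in `𝔸`
converges in Hausdorff distance to the essential continuum `∂𝒰⁻`, where
`𝒰⁻ = ⋃ₙ 𝒰⁻(Eₙ)`. -/
theorem increasing_essential_continua_limit
    (E : ℕ → Set Ann)
    (hcont : ∀ n, IsCompact (E n) ∧ IsConnected (E n) ∧ EssentialA (E n))
    (hbd : ∃ Elo Ehi : Set Ann,
      (IsCompact Elo ∧ IsConnected Elo ∧ EssentialA Elo) ∧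
      (IsCompact Ehi ∧ IsConnected Ehi ∧ EssentialA Ehi) ∧
      ∀ n, Elo ⊆ Uminus (E n) ∧ E n ⊆ Uminus Ehi)
    (hmono : ∀ n, E n ⊆ Uminus (E (n + 1))) :
    (IsCompact (frontier (⋃ n, Uminus (E n))) ∧
      IsConnected (frontier (⋃ n, Uminus (E n))) ∧
      EssentialA (frontier (⋃ n, Uminus (E n)))) ∧
    Tendsto (fun n => Metric.hausdorffDist (E n) (frontier (⋃ m, Uminus (E m))))
      atTop (nhds 0) := by
  obtain ⟨_, Ehi, -, ⟨hhiC, hhiConn, hhiEss⟩, hbds⟩ := hbd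
  set V : ℕ → Set Ann := fun n => Uminus (E n)
  have hVo (n : ℕ) : IsOpen (V n) := isOpen_Uminus (hcont n).1
  have hVmono {n : ℕ} {F : Set Ann} (hF : IsCompact F ∧ IsConnected F ∧ EssentialA F)
      (h : E n ⊆ Uminus F) : V n ⊆ Uminus F :=
    Uminus_mono (hcont n).1 (hcont n).2.1.nonempty (hcont n).2.2 hF.1 hF.2.1 hF.2.2 h
  have hV : Monotone V := monotone_nat_of_le_succ fun n => hVmono (hcont (n + 1)) (hmono n)
  obtain ⟨e, -, he⟩ := hhiC.exists_Uminus_subset_setOf_snd_lt hhiConn.nonempty hhiEss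
  have hUh : ∀ z ∈ ⋃ n, V n, z.2 ≤ e.2 := fun z hz =>
    let ⟨n, hzn⟩ := mem_iUnion.1 hz
    (he (hVmono ⟨hhiC, hhiConn, hhiEss⟩ (hbds n).2 hzn)).le
  obtain ⟨c, hc⟩ := (hcont 0).1.exists_setOf_snd_lt_subset_Uminus
  have hcU := hc.trans (subset_iUnion V 0)
  have hcpt := isCompact_closure_sdiff_of_bounds (hVo 0) hUh hc
  have hFc : IsCompact (frontier (⋃ n, V n)) := hcpt.of_isClosed_subset isClosed_frontier
    (sdiff_subset_sdiff_right (interior_maximal (subset_iUnion V 0) (hVo 0)))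
  have hFne : (frontier (⋃ n, V n)).Nonempty := nonempty_frontier_iff.2
    ⟨⟨((0 : T1), c - 1), hcU (sub_one_lt c)⟩, (ne_univ_iff_exists_notMem _).2
      ⟨((0 : T1), e.2 + 1), fun hz => (lt_add_one e.2).not_ge (hUh _ hz)⟩⟩
  have hlim : HausdorffTendsto E atTop (frontier (⋃ n, V n)) := fun ε hε =>
    (eventually_subset_thickening_frontier_iUnion hV hVo hcpt
      (fun n => (hmono n).trans ((subset_iUnion V (n + 1)).trans subset_closure))
      (fun n => disjoint_Uminus (E n)) ε hε).and
    (hFc.eventually_subset_thickening (fun _ hx => eventually_mem_thickening_of_mem_frontier_iUnion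
      hV (fun n => (hcont n).1.exists_Uminus_eq_connectedComponentIn) hx) ε hε)
  exact ⟨⟨hFc, ⟨hFne, hlim.isPreconnected hFc fun n => (hcont n).2.1.isPreconnected⟩,
    essentialA_frontier ⟨e.2, hUh⟩ hcU⟩, hlim.tendsto_hausdorffDist⟩

end
end
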